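/- Let a, b ∈ V with a ≠ b. Then the following are equivalent: (i) there exists c ∈ V such that ϑ_b(u) = ϑ_a(u + ⟨u,c⟩·c) for all u ∈ V (i.e., ϑ_a is carried to ϑ_b by the symplectic transvection T_c); (ii) there exists γ ∈ F, γ ≠ 0, such that ϑ_b(u) = ϑ_a(u + γ²·⟨u, a+b⟩·(a+b)) for all u ∈ V; (iii) there exists t ∈ F with t² + t + ϑ_0(a) + ϑ_0(b) = 0; (iv) Tr(ϑ_0(a)) = Tr(ϑ_0(b)). -/

import Mathlib

/-!
Expanding the quadratic form gives `ϑ_a(T_c u) = ϑ_a(u) + ⟨u,c⟩² (ϑ_0(c) + 1 + ⟨a,c⟩²)`, while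
`ϑ_b(u) = ϑ_a(u) + ⟨u,a+b⟩²`. As squaring is bijective on `F` and `⟨·,·⟩` is nondegenerate,
`T_c` can carry `ϑ_a` to `ϑ_b` only if `c = γ(a+b)` with `γ ≠ 0`, and then it does exactly when
`γ²(γ²(D + σ + σ²) + 1) = 1`, where `D = ϑ_0(a) + ϑ_0(b)` and `σ = ⟨a,b⟩`. With `s = γ⁻²` this
reads `(s+σ)² + (s+σ) + D = 0`; the roots of `t² + t + D` come in pairs `t, t+1`, so `s = 0` can
always be avoided. Finally (Artin–Schreier) `t ↦ t² + t` is additive with kernel `{0,1}` and its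
image lies in the kernel of the trace, which has index 2, so the image is that kernel.
-/

open Finset

noncomputable section

/-- The symplectic bilinear form `⟨u,v⟩ = ∑_{i<m} (u_i v_{m+i} + u_{m+i} v_i)` on `F^{2m}`,
`F = GF(2^h)`. -/
def symp (h m : ℕ) (u v : Fin (2*m) → GaloisField 2 h) : GaloisField 2 h :=
  ∑ i : Fin m, (u ⟨i.1, by omega⟩ * v ⟨m + i.1, by omega⟩ +
    u ⟨m + i.1, by omega⟩ * v ⟨i.1, by omega⟩)

/-- The quadratic form `ϑ_0(u) = ∑_{i<m} u_i u_{m+i}`. -/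
def th0 (h m : ℕ) (u : Fin (2*m) → GaloisField 2 h) : GaloisField 2 h :=
  ∑ i : Fin m, u ⟨i.1, by omega⟩ * u ⟨m + i.1, by omega⟩

/-- The quadratic form `ϑ_a(u) = ϑ_0(u) + ⟨a,u⟩²`. -/
def th (h m : ℕ) (a u : Fin (2*m) → GaloisField 2 h) : GaloisField 2 h :=
  th0 h m u + (symp h m a u)^2

/-- The absolute trace `GF(2^h) → F_2`. -/
def tr (h : ℕ) (x : GaloisField 2 h) : ZMod 2 :=
  Algebra.trace (ZMod 2) (GaloisField 2 h) x

end

section ArtinSchreier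
variable {K : Type*} [Field K] [Finite K] [Algebra (ZMod 2) K]

theorem trace_sq_eq_trace (x : K) :
    Algebra.trace (ZMod 2) K (x ^ 2) = Algebra.trace (ZMod 2) K x := by
  have := Fintype.ofFinite K
  have hfrob := FiniteField.coe_frobeniusAlgEquivOfAlgebraic (ZMod 2) K
  rw [ZMod.card] at hfrob
  simpa [hfrob] using
    Algebra.trace_eq_of_algEquiv (FiniteField.frobeniusAlgEquivOfAlgebraic (ZMod 2) K) x

theorem trace_sq_add_self (t : K) : Algebra.trace (ZMod 2) K (t ^ 2 + t) = 0 := by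
  rw [map_add, trace_sq_eq_trace, CharTwo.add_self_eq_zero]

theorem exists_sq_add_self_add_eq_zero_iff_trace_eq_zero (D : K) :
    (∃ t, t ^ 2 + t + D = 0) ↔ Algebra.trace (ZMod 2) K D = 0 := by
  have : CharP K 2 := charP_of_injective_algebraMap' (ZMod 2) 2
  let trace := (Algebra.trace (ZMod 2) K).toAddMonoidHom
  let φ : K →+ trace.ker :=
    AddMonoidHom.codRestrict
      { toFun := fun t => t ^ 2 + t
        map_zero' := by ring
        map_add' := fun s t => by rw [CharTwo.add_sq]; ring }
      trace.ker trace_sq_add_self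
  have hker : (φ.ker : Set K) ⊆ {0, 1} := by
    intro t ht
    have ht : t ^ 2 + t = 0 := congrArg Subtype.val (AddMonoidHom.mem_ker.mp ht)
    rw [show t ^ 2 + t = t * (t + 1) by ring] at ht
    rcases mul_eq_zero.mp ht with ht | ht
    · exact Or.inl ht
    · exact Or.inr (CharTwo.add_eq_zero.mp ht)
  have hcard : Nat.card K = Nat.card trace.ker * 2 := by
    rw [← trace.ker.card_mul_index, AddSubgroup.index_ker,
      AddMonoidHom.range_eq_top.mpr (Algebra.trace_surjective (ZMod 2) K), AddSubgroup.card_top,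
      Nat.card_zmod]
  have hφ : Function.Surjective φ := by
    refine AddMonoidHom.surjective_of_card_ker_le_div φ ?_
    rw [hcard, Nat.mul_div_cancel_left _ Nat.card_pos]
    exact (Nat.card_mono (Set.toFinite _) hker).trans (Set.ncard_pair zero_ne_one).le
  constructor
  · rintro ⟨t, ht⟩
    rw [← CharTwo.add_eq_zero.mp ht]
    exact trace_sq_add_self t
  · intro hD
    obtain ⟨t, ht⟩ := hφ ⟨D, hD⟩
    exact ⟨t, CharTwo.add_eq_zero.mpr (Subtype.ext_iff.mp ht)⟩

theorem exists_sq_add_self_add_add_eq_zero_iff_trace_eq_trace (x y : K) :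
    (∃ t, t ^ 2 + t + x + y = 0) ↔ Algebra.trace (ZMod 2) K x = Algebra.trace (ZMod 2) K y := by
  simp_rw [add_assoc (_ ^ 2 + _)]
  rw [exists_sq_add_self_add_eq_zero_iff_trace_eq_zero, map_add, CharTwo.add_eq_zero]

end ArtinSchreier

section CharTwoField
variable {K : Type*} [Field K] [CharP K 2]

theorem exists_sq_add_self_add_eq_zero_and_ne {D t : K} (ht : t ^ 2 + t + D = 0) (σ : K) :
    ∃ t', t' ^ 2 + t' + D = 0 ∧ t' ≠ σ := by
  by_cases hσ : t = σ
  · refine ⟨t + 1, ?_, fun h => one_ne_zero (by rwa [← hσ, add_eq_left] at h)⟩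
    linear_combination ht + (t + 1) * CharTwo.two_eq_zero (R := K)
  · exact ⟨t, ht, hσ⟩

theorem exists_ne_zero_sq_mul_eq_one_iff [PerfectRing K 2] (D σ : K) :
    (∃ γ : K, γ ≠ 0 ∧ γ ^ 2 * (γ ^ 2 * (D + σ + σ ^ 2) + 1) = 1) ↔ ∃ t : K, t ^ 2 + t + D = 0 := by
  have h2 : (2 : K) = 0 := CharTwo.two_eq_zero
  constructor
  · rintro ⟨γ, hγ, h⟩
    refine ⟨(γ⁻¹) ^ 2 + σ, ?_⟩
    field_simp
    linear_combination h + (1 + γ ^ 2 * σ) * h2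
  · rintro ⟨t, ht⟩
    obtain ⟨t, ht, htσ⟩ := exists_sq_add_self_add_eq_zero_and_ne ht σ
    have hs : t + σ ≠ 0 := fun h => htσ (CharTwo.add_eq_zero.mp h)
    obtain ⟨γ, hγ⟩ := surjective_frobenius K 2 (t + σ)⁻¹
    rw [frobenius_def] at hγ
    refine ⟨γ, fun h => inv_ne_zero hs (by rw [← hγ, h, zero_pow two_ne_zero]), ?_⟩
    rw [hγ]
    field_simp
    linear_combination -ht + (t + D + σ - σ * t) * h2

end CharTwoField

section QuadraticForms
variable {h m : ℕ}

theorem symp_comm (u v : Fin (2*m) → GaloisField 2 h) : symp h m u v = symp h m v u := by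
  unfold symp; exact Finset.sum_congr rfl fun i _ => by ring

theorem symp_self (u : Fin (2*m) → GaloisField 2 h) : symp h m u u = 0 := by
  unfold symp
  exact Finset.sum_eq_zero fun i _ => by rw [mul_comm]; exact CharTwo.add_self_eq_zero _

theorem symp_add_right (u v w : Fin (2*m) → GaloisField 2 h) :
    symp h m u (v + w) = symp h m u v + symp h m u w := by
  unfold symp; rw [← Finset.sum_add_distrib]
  exact Finset.sum_congr rfl fun i _ => by simp only [Pi.add_apply]; ring

theorem symp_smul_right (k : GaloisField 2 h) (u v : Fin (2*m) → GaloisField 2 h) :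
    symp h m u (k • v) = k * symp h m u v := by
  unfold symp; rw [Finset.mul_sum]
  exact Finset.sum_congr rfl fun i _ => by simp only [Pi.smul_apply, smul_eq_mul]; ring

theorem symp_smul_left (k : GaloisField 2 h) (u v : Fin (2*m) → GaloisField 2 h) :
    symp h m (k • u) v = k * symp h m u v := by
  rw [symp_comm, symp_smul_right, symp_comm]

theorem th0_add (u v : Fin (2*m) → GaloisField 2 h) :
    th0 h m (u + v) = th0 h m u + th0 h m v + symp h m u v := by
  unfold th0 symp
  rw [← Finset.sum_add_distrib, ← Finset.sum_add_distrib]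
  exact Finset.sum_congr rfl fun i _ => by simp only [Pi.add_apply]; ring

theorem th0_smul (k : GaloisField 2 h) (u : Fin (2*m) → GaloisField 2 h) :
    th0 h m (k • u) = k ^ 2 * th0 h m u := by
  unfold th0; rw [Finset.mul_sum]
  exact Finset.sum_congr rfl fun i _ => by simp only [Pi.smul_apply, smul_eq_mul]; ring

theorem symp_single_left_fst (i : Fin m) (c : Fin (2*m) → GaloisField 2 h) :
    symp h m (Pi.single ⟨i, by omega⟩ 1) c = c ⟨m + i, by omega⟩ := by
  have hi : ∀ x : Fin m, m + x.1 ≠ i.1 := fun x => by omega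
  simp [symp, Pi.single_apply, hi, Fin.val_inj]

theorem symp_single_left_snd (i : Fin m) (c : Fin (2*m) → GaloisField 2 h) :
    symp h m (Pi.single ⟨m + i, by omega⟩ 1) c = c ⟨i, by omega⟩ := by
  have hi : ∀ x : Fin m, x.1 ≠ m + i.1 := fun x => by omega
  simp [symp, Pi.single_apply, hi, Fin.val_inj]

theorem symp_zero_right (u : Fin (2*m) → GaloisField 2 h) : symp h m u 0 = 0 := by
  simp [symp]

theorem eq_of_forall_symp_eq {v w : Fin (2*m) → GaloisField 2 h}
    (H : ∀ u, symp h m u v = symp h m u w) : v = w := by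
  funext j
  rcases lt_or_ge j.1 m with hj | hj
  · have := H (Pi.single ⟨m + j, by omega⟩ 1)
    rwa [symp_single_left_snd ⟨j, hj⟩, symp_single_left_snd ⟨j, hj⟩] at this
  · have hj' : j = ⟨m + (j - m), by omega⟩ := Fin.ext (by simp only; omega)
    have := H (Pi.single ⟨j - m, by omega⟩ 1)
    rwa [symp_single_left_fst ⟨j - m, by omega⟩, symp_single_left_fst ⟨j - m, by omega⟩,
      ← hj'] at this

theorem exists_symp_eq_one {v : Fin (2*m) → GaloisField 2 h} (hv : v ≠ 0) :
    ∃ u, symp h m u v = 1 := by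
  obtain ⟨u, hu⟩ : ∃ u, symp h m u v ≠ 0 := by
    by_contra! H
    exact hv (eq_of_forall_symp_eq fun u => by rw [H u, symp_zero_right])
  exact ⟨(symp h m u v)⁻¹ • u, by rw [symp_smul_left, inv_mul_cancel₀ hu]⟩

theorem add_ne_zero_of_ne {a b : Fin (2*m) → GaloisField 2 h} (hab : a ≠ b) : a + b ≠ 0 :=
  fun hab0 => hab (funext fun j => CharTwo.add_eq_zero.mp (congrFun hab0 j))

theorem eq_smul_of_forall_sq_symp_eq {v c : Fin (2*m) → GaloisField 2 h} {k : GaloisField 2 h}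
    (H : ∀ u, symp h m u v ^ 2 = symp h m u c ^ 2 * k) : ∃ l : GaloisField 2 h, v = l • c := by
  obtain ⟨l, hl⟩ := surjective_frobenius (GaloisField 2 h) 2 k
  refine ⟨l, eq_of_forall_symp_eq fun u => CharTwo.sq_injective ?_⟩
  simp only [symp_smul_right, mul_pow, H u, ← hl, frobenius_def, mul_comm]

theorem forall_sq_symp_eq_sq_symp_mul_iff {v : Fin (2*m) → GaloisField 2 h} (hv : v ≠ 0)
    (k : GaloisField 2 h) : (∀ u, symp h m u v ^ 2 = symp h m u v ^ 2 * k) ↔ k = 1 := by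
  refine ⟨fun H => ?_, by rintro rfl u; rw [mul_one]⟩
  obtain ⟨u, hu⟩ := exists_symp_eq_one hv
  simpa [hu] using (H u).symm

theorem th_transvection (a c u : Fin (2*m) → GaloisField 2 h) :
    th h m a (u + symp h m u c • c) =
      th h m a u + symp h m u c ^ 2 * (th0 h m c + 1 + symp h m a c ^ 2) := by
  unfold th
  rw [th0_add, th0_smul, symp_add_right, symp_smul_right, symp_smul_right, symp_comm u c,
    CharTwo.add_sq]
  ring

theorem th_eq_th_add (a b u : Fin (2*m) → GaloisField 2 h) :
    th h m b u = th h m a u + symp h m u (a + b) ^ 2 := by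
  unfold th
  rw [symp_add_right, symp_comm u a, symp_comm u b, CharTwo.add_sq, add_assoc,
    CharTwo.add_cancel_left]

theorem th_transvection_iff (a b c : Fin (2*m) → GaloisField 2 h) :
    (∀ u, th h m b u = th h m a (u + symp h m u c • c)) ↔
      ∀ u, symp h m u (a + b) ^ 2 = symp h m u c ^ 2 * (th0 h m c + 1 + symp h m a c ^ 2) := by
  simp only [th_transvection, th_eq_th_add a b, add_right_inj]

theorem transvection_smul (γ : GaloisField 2 h) (v u : Fin (2*m) → GaloisField 2 h) :
    u + (γ ^ 2 * symp h m u v) • v = u + symp h m u (γ • v) • (γ • v) := by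
  rw [symp_smul_right, smul_smul]
  ring_nf

theorem exists_transvection_iff_exists_smul {a b : Fin (2*m) → GaloisField 2 h} (hab : a ≠ b) :
    (∃ c : Fin (2*m) → GaloisField 2 h, ∀ u, th h m b u = th h m a (u + symp h m u c • c)) ↔
      ∃ γ : GaloisField 2 h, γ ≠ 0 ∧
        ∀ u, th h m b u = th h m a (u + (γ ^ 2 * symp h m u (a + b)) • (a + b)) := by
  constructor
  · rintro ⟨c, H⟩
    obtain ⟨l, hl⟩ := eq_smul_of_forall_sq_symp_eq ((th_transvection_iff a b c).mp H)
    have hl0 : l ≠ 0 := by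
      rintro rfl
      exact add_ne_zero_of_ne hab (by rw [hl, zero_smul])
    refine ⟨l⁻¹, inv_ne_zero hl0, fun u => ?_⟩
    rw [transvection_smul, hl, inv_smul_smul₀ hl0]
    exact H u
  · rintro ⟨γ, -, H⟩
    exact ⟨γ • (a + b), fun u => by rw [← transvection_smul]; exact H u⟩

theorem transvection_smul_add_iff {a b : Fin (2*m) → GaloisField 2 h} (hab : a ≠ b)
    (γ : GaloisField 2 h) :
    (∀ u, th h m b u = th h m a (u + (γ ^ 2 * symp h m u (a + b)) • (a + b))) ↔
      γ ^ 2 * (γ ^ 2 * (th0 h m a + th0 h m b + symp h m a b + symp h m a b ^ 2) + 1) = 1 := by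
  simp_rw [transvection_smul]
  rw [th_transvection_iff, ← forall_sq_symp_eq_sq_symp_mul_iff (add_ne_zero_of_ne hab)]
  refine forall_congr' fun u => ?_
  rw [symp_smul_right, symp_smul_right, th0_smul, th0_add, symp_add_right a a, symp_self, zero_add]
  ring_nf

end QuadraticForms

theorem stmt_17_general (h m : ℕ)
    (a b : Fin (2*m) → GaloisField 2 h) (hab : a ≠ b) :
    ((∃ c : Fin (2*m) → GaloisField 2 h,
        ∀ u, th h m b u = th h m a (u + symp h m u c • c))
      ↔ (∃ γ : GaloisField 2 h, γ ≠ 0 ∧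
        ∀ u, th h m b u = th h m a (u + (γ^2 * symp h m u (a + b)) • (a + b))))
    ∧ ((∃ γ : GaloisField 2 h, γ ≠ 0 ∧
        ∀ u, th h m b u = th h m a (u + (γ^2 * symp h m u (a + b)) • (a + b)))
      ↔ (∃ t : GaloisField 2 h, t^2 + t + th0 h m a + th0 h m b = 0))
    ∧ ((∃ t : GaloisField 2 h, t^2 + t + th0 h m a + th0 h m b = 0)
      ↔ tr h (th0 h m a) = tr h (th0 h m b)) := by
  refine ⟨exists_transvection_iff_exists_smul hab, ?_,
    exists_sq_add_self_add_add_eq_zero_iff_trace_eq_trace _ _⟩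
  simp_rw [transvection_smul_add_iff hab, add_assoc (_ ^ 2 + _)]
  exact exists_ne_zero_sq_mul_eq_one_iff _ _

/-- For `a ≠ b` the following are equivalent: (i) some symplectic transvection `T_c`
carries `ϑ_a` to `ϑ_b`; (ii) some transvection `T_{γ(a+b)}` with `γ ≠ 0` does;
(iii) `t² + t + ϑ_0(a) + ϑ_0(b)` has a root in `F`; (iv) `Tr(ϑ_0(a)) = Tr(ϑ_0(b))`. -/
theorem stmt_17 (h m : ℕ) (hh : 1 ≤ h) (hm : 1 ≤ m)
    (a b : Fin (2*m) → GaloisField 2 h) (hab : a ≠ b) :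
    ((∃ c : Fin (2*m) → GaloisField 2 h,
        ∀ u, th h m b u = th h m a (u + symp h m u c • c))
      ↔ (∃ γ : GaloisField 2 h, γ ≠ 0 ∧
        ∀ u, th h m b u = th h m a (u + (γ^2 * symp h m u (a + b)) • (a + b))))
    ∧ ((∃ γ : GaloisField 2 h, γ ≠ 0 ∧
        ∀ u, th h m b u = th h m a (u + (γ^2 * symp h m u (a + b)) • (a + b)))
      ↔ (∃ t : GaloisField 2 h, t^2 + t + th0 h m a + th0 h m b = 0))
    ∧ ((∃ t : GaloisField 2 h, t^2 + t + th0 h m a + th0 h m b = 0)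
      ↔ tr h (th0 h m a) = tr h (th0 h m b)) :=
  stmt_17_general h m a b hab
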